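/- Set ρ = cos²θ, let χ(t) = min(1, max(0, 2 − |t|)), and for n > 0 define u_n(x₁,x₂) = e^{-α|x₁|/2} · F(x₂ tan θ)^ρ · χ(x₂/n). Then for every n > 0, ∫_Ω u_n(x)² dx ≤ 6 (1 + 2cos²θ) n / α^{2cos²θ+1}. -/

import Mathlib

open Real MeasureTheory Set Filter

/-- `F α t = ∫_{-∞}^t e^{-α|x|} dx`. -/
noncomputable def F (α t : ℝ) : ℝ := ∫ x in Iio t, exp (-α * |x|)

/-- The half-plane-like domain `Ω = {(x₁,x₂) : x₁ < x₂ tan θ}`. -/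
def Omg (θ : ℝ) : Set (ℝ × ℝ) := {p | p.1 < p.2 * tan θ}

/-- The functional `R(g) = ∫ g'·(g'·F(x tanθ) − g·e^{-α|x|tanθ}·cot θ) dx`. -/
noncomputable def Rfun (α θ : ℝ) (g : ℝ → ℝ) : ℝ :=
  ∫ x : ℝ, deriv g x *
    (deriv g x * F α (x * tan θ) - g x * exp (-α * |x| * tan θ) * cot θ)

/-- The quantity `Λ(θ)` from the upper bound for the lowest eigenvalue. -/
noncomputable def Lam (θ : ℝ) : ℝ :=
  3 * cos θ ^ 6 * ((2:ℝ) ^ (2 * cos θ ^ 2) - 1) ^ 2 /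
    (2 * (1 + 2 * cos θ ^ 2) ^ 3 *
      (108 + 180 * cos θ ^ 2 - 132 * cos θ ^ 4 + 45 * cos θ ^ 6 - 5 * cos θ ^ 8))

/-! Integrating out `x₁` first, the inner integral of `e^{-α|x₁|}` over `x₁ < x₂ tan θ` is exactly
`F(x₂ tan θ)`, so `∫_Ω u_n² = ∫ F(x₂ tan θ)^{2ρ+1} χ(x₂/n)² dx₂`. The cutoff confines this to
`[-2n, 2n]`, where `F ≤ 1/α` on the negative half and `F ≤ 2/α` on the positive half; this gives
`2n (1 + 2^{2ρ+1}) / α^{2ρ+1}`, and Bernoulli's inequality `4^ρ ≤ 1 + 3ρ` finishes. -/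

section ExpAbs

variable {α : ℝ}

lemma integrable_exp_neg_mul_abs (hα : 0 < α) : Integrable fun x : ℝ => exp (-α * |x|) := by
  have hIic : IntegrableOn (fun x : ℝ => exp (-α * |x|)) (Iic 0) :=
    (integrableOn_exp_mul_Iic hα 0).congr_fun (fun x hx => by
      rw [abs_of_nonpos (mem_Iic.1 hx)]; ring_nf) measurableSet_Iic
  have hIoi : IntegrableOn (fun x : ℝ => exp (-α * |x|)) (Ioi 0) :=
    (integrableOn_exp_mul_Ioi (neg_neg_of_pos hα) 0).congr_fun (fun x hx => by
      rw [abs_of_pos (mem_Ioi.1 hx)]) measurableSet_Ioi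
  simpa [← integrableOn_univ, Iic_union_Ioi] using hIic.union hIoi

lemma integral_exp_neg_mul_abs (hα : 0 < α) : ∫ x : ℝ, exp (-α * |x|) = 2 / α := by
  rw [integral_comp_abs (f := fun x => exp (-α * x)), integral_exp_mul_Ioi (neg_neg_of_pos hα)]
  field_simp
  simp

lemma integral_Iio_zero_exp_neg_mul_abs (hα : 0 < α) :
    ∫ x in Iio (0 : ℝ), exp (-α * |x|) = 1 / α := by
  rw [setIntegral_congr_set Iio_ae_eq_Iic,
    setIntegral_congr_fun measurableSet_Iic (g := fun x => exp (α * x)) fun x hx => by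
      rw [abs_of_nonpos (mem_Iic.1 hx)]; ring_nf,
    integral_exp_mul_Iic hα]
  simp

end ExpAbs

lemma F_nonneg (α t : ℝ) : 0 ≤ F α t :=
  setIntegral_nonneg measurableSet_Iio fun _ _ => (exp_pos _).le

section F

variable {α : ℝ}

lemma F_monotone (hα : 0 < α) : Monotone (F α) := fun _ _ hst =>
  setIntegral_mono_set (integrable_exp_neg_mul_abs hα).integrableOn
    (ae_of_all _ fun _ => (exp_pos _).le) (Iio_subset_Iio hst).eventuallyLE

lemma F_zero (hα : 0 < α) : F α 0 = 1 / α :=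
  integral_Iio_zero_exp_neg_mul_abs hα

lemma F_le_of_nonpos (hα : 0 < α) {t : ℝ} (ht : t ≤ 0) : F α t ≤ 1 / α :=
  F_zero hα ▸ F_monotone hα ht

lemma F_le (hα : 0 < α) (t : ℝ) : F α t ≤ 2 / α :=
  integral_exp_neg_mul_abs hα ▸ setIntegral_le_integral (integrable_exp_neg_mul_abs hα)
    (ae_of_all _ fun _ => (exp_pos _).le)

end F

theorem setIntegral_fst_lt_mul {μ ν : Measure ℝ} [SFinite μ] [SFinite ν] {f g φ : ℝ → ℝ}
    (hf : Integrable f μ) (hg : Integrable g ν) (hφ : Measurable φ) :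
    ∫ p in {p : ℝ × ℝ | p.1 < φ p.2}, f p.1 * g p.2 ∂μ.prod ν
      = ∫ y, (∫ x in Iio (φ y), f x ∂μ) * g y ∂ν := by
  have hs : MeasurableSet {p : ℝ × ℝ | p.1 < φ p.2} :=
    measurableSet_lt measurable_fst (hφ.comp measurable_snd)
  rw [← integral_indicator hs, integral_prod_symm _ ((hf.mul_prod hg).indicator hs)]
  refine integral_congr_ae (ae_of_all _ fun y => ?_)
  dsimp only
  rw [← integral_mul_const, ← integral_indicator measurableSet_Iio]
  congr 1 with x

def cutoff (t : ℝ) : ℝ := min 1 (max 0 (2 - |t|))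

lemma cutoff_nonneg (t : ℝ) : 0 ≤ cutoff t := le_min zero_le_one (le_max_left _ _)

lemma cutoff_le_one (t : ℝ) : cutoff t ≤ 1 := min_le_left _ _

lemma continuous_cutoff : Continuous cutoff := by
  unfold cutoff; fun_prop

lemma cutoff_div_eq_zero {n y : ℝ} (hn : 0 < n) (hy : y ∉ Icc (-(2 * n)) (2 * n)) :
    cutoff (y / n) = 0 := by
  have : 2 ≤ |y / n| := by
    rw [abs_div, abs_of_pos hn, le_div_iff₀ hn]
    exact (not_le.mp (mt abs_le.mp hy)).le
  rw [cutoff, max_eq_left (by linarith), min_eq_right zero_le_one]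

lemma mul_rpow_mul_sq_le {a b c ρ : ℝ} (ha : 0 ≤ a) (hab : a ≤ b) (hρ : 0 ≤ ρ) (hc : |c| ≤ 1) :
    a * (a ^ ρ * c) ^ 2 ≤ b ^ (2 * ρ + 1) :=
  have hexp : 0 < 2 * ρ + 1 := by linarith
  calc a * (a ^ ρ * c) ^ 2 = a ^ (2 * ρ + 1) * c ^ 2 := by
        rw [rpow_add' ha hexp.ne', rpow_one, mul_comm 2 ρ, rpow_mul ha, rpow_two]; ring
    _ ≤ b ^ (2 * ρ + 1) * 1 :=
        mul_le_mul (rpow_le_rpow ha hab hexp.le) ((sq_le_one_iff_abs_le_one c).2 hc)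
          (sq_nonneg c) (rpow_nonneg (ha.trans hab) _)
    _ = b ^ (2 * ρ + 1) := mul_one _

noncomputable def trialProfile (α θ ρ n y : ℝ) : ℝ := F α (y * tan θ) ^ ρ * cutoff (y / n)

section TrialProfile

variable {α θ ρ n : ℝ}

lemma measurable_trialProfile (hα : 0 < α) : Measurable (trialProfile α θ ρ n) :=
  (((F_monotone hα).measurable.comp (measurable_id.mul_const _)).pow_const ρ).mul
    (continuous_cutoff.measurable.comp (measurable_id.div_const n))

lemma trialProfile_eq_zero (hn : 0 < n) {y : ℝ} (hy : y ∉ Icc (-(2 * n)) (2 * n)) :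
    trialProfile α θ ρ n y = 0 := by
  rw [trialProfile, cutoff_div_eq_zero hn hy, mul_zero]

lemma abs_trialProfile_le (hα : 0 < α) (hρ : 0 ≤ ρ) (y : ℝ) :
    |trialProfile α θ ρ n y| ≤ (2 / α) ^ ρ := by
  rw [trialProfile, abs_mul, abs_of_nonneg (rpow_nonneg (F_nonneg _ _) _),
    abs_of_nonneg (cutoff_nonneg _)]
  exact (mul_le_of_le_one_right (rpow_nonneg (F_nonneg _ _) _) (cutoff_le_one _)).trans
    (rpow_le_rpow (F_nonneg _ _) (F_le hα _) hρ)

lemma integrable_trialProfile_sq (hα : 0 < α) (hρ : 0 ≤ ρ) (hn : 0 < n) :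
    Integrable fun y => trialProfile α θ ρ n y ^ 2 := by
  refine IntegrableOn.integrable_of_forall_notMem_eq_zero (s := Icc (-(2 * n)) (2 * n)) ?_
    fun y hy => by rw [trialProfile_eq_zero hn hy, zero_pow two_ne_zero]
  refine Measure.integrableOn_of_bounded (M := ((2 / α) ^ ρ) ^ 2) measure_Icc_lt_top.ne
    ((measurable_trialProfile hα).pow_const 2).aestronglyMeasurable (ae_of_all _ fun y => ?_)
  rw [norm_pow, Real.norm_eq_abs]
  exact pow_le_pow_left₀ (abs_nonneg _) (abs_trialProfile_le hα hρ y) 2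

end TrialProfile

noncomputable def stepBound (n a b : ℝ) : ℝ → ℝ :=
  (Icc (-(2 * n)) 0).indicator (fun _ => a) + (Ioc 0 (2 * n)).indicator (fun _ => b)

lemma stepBound_nonneg {n a b : ℝ} (ha : 0 ≤ a) (hb : 0 ≤ b) (y : ℝ) : 0 ≤ stepBound n a b y :=
  add_nonneg (indicator_nonneg (fun _ _ => ha) y) (indicator_nonneg (fun _ _ => hb) y)

lemma integrable_stepBound (n a b : ℝ) : Integrable (stepBound n a b) :=
  ((integrableOn_const measure_Icc_lt_top.ne).integrable_indicator measurableSet_Icc).add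
    ((integrableOn_const measure_Ioc_lt_top.ne).integrable_indicator measurableSet_Ioc)

lemma integral_stepBound {n : ℝ} (hn : 0 ≤ n) (a b : ℝ) :
    ∫ y, stepBound n a b y = 2 * n * (a + b) := by
  rw [stepBound, integral_add'
      ((integrableOn_const measure_Icc_lt_top.ne).integrable_indicator measurableSet_Icc)
      ((integrableOn_const measure_Ioc_lt_top.ne).integrable_indicator measurableSet_Ioc),
    integral_indicator_const _ measurableSet_Icc, integral_indicator_const _ measurableSet_Ioc,
    Real.volume_real_Icc_of_le (by linarith), Real.volume_real_Ioc_of_le (by linarith)]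
  simp only [smul_eq_mul]
  ring

lemma F_mul_trialProfile_sq_le {α θ ρ n : ℝ} (hα : 0 < α) (htan : 0 ≤ tan θ) (hρ : 0 ≤ ρ)
    (hn : 0 < n) (y : ℝ) :
    F α (y * tan θ) * trialProfile α θ ρ n y ^ 2
      ≤ stepBound n ((1 / α) ^ (2 * ρ + 1)) ((2 / α) ^ (2 * ρ + 1)) y := by
  have hcut : |cutoff (y / n)| ≤ 1 :=
    abs_le.2 ⟨by linarith [cutoff_nonneg (y / n)], cutoff_le_one _⟩
  by_cases hy : y ∈ Icc (-(2 * n)) (2 * n)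
  · rcases le_or_gt y 0 with hy0 | hy0
    · have hmem : y ∈ Icc (-(2 * n)) 0 := ⟨hy.1, hy0⟩
      have hnotMem : y ∉ Ioc 0 (2 * n) := fun h => (not_lt.2 hy0) h.1
      simp only [stepBound, Pi.add_apply, indicator_of_mem hmem, indicator_of_notMem hnotMem,
        add_zero]
      exact mul_rpow_mul_sq_le (F_nonneg _ _)
        (F_le_of_nonpos hα (mul_nonpos_of_nonpos_of_nonneg hy0 htan)) hρ hcut
    · have hmem : y ∈ Ioc 0 (2 * n) := ⟨hy0, hy.2⟩
      have hnotMem : y ∉ Icc (-(2 * n)) 0 := fun h => (not_le.2 hy0) h.2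
      simp only [stepBound, Pi.add_apply, indicator_of_mem hmem, indicator_of_notMem hnotMem,
        zero_add]
      exact mul_rpow_mul_sq_le (F_nonneg _ _) (F_le hα _) hρ hcut
  · rw [trialProfile_eq_zero hn hy, zero_pow two_ne_zero, mul_zero]
    exact stepBound_nonneg (by positivity) (by positivity) y

lemma two_rpow_two_mul_add_one_le {ρ : ℝ} (hρ0 : 0 ≤ ρ) (hρ1 : ρ ≤ 1) :
    (2 : ℝ) ^ (2 * ρ + 1) ≤ 2 + 6 * ρ := by
  have h4 : (1 + 3 : ℝ) ^ ρ ≤ 1 + ρ * 3 :=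
    rpow_one_add_le_one_add_mul_self (by norm_num) hρ0 hρ1
  rw [rpow_add two_pos, rpow_one, rpow_mul zero_le_two]
  norm_num at h4 ⊢
  linarith

lemma two_mul_one_div_rpow_add_two_div_rpow_le {α ρ n : ℝ} (hα : 0 < α) (hρ0 : 0 ≤ ρ)
    (hρ1 : ρ ≤ 1) (hn : 0 ≤ n) :
    2 * n * ((1 / α) ^ (2 * ρ + 1) + (2 / α) ^ (2 * ρ + 1))
      ≤ 6 * (1 + 2 * ρ) * n / α ^ (2 * ρ + 1) := by
  rw [div_rpow zero_le_one hα.le, div_rpow zero_le_two hα.le, one_rpow, ← add_div, mul_div_assoc']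
  gcongr ?_ / _
  nlinarith [two_rpow_two_mul_add_one_le hρ0 hρ1]

/-- bound on the squared `L²(Ω)`-norm of the trial function `u_n`
for `ρ = cos²θ` and the piecewise-linear cutoff. -/
theorem trial_function_norm_bound (α θ : ℝ) (hα : 0 < α) (hθ : θ ∈ Ioo 0 (π/2))
    (n : ℝ) (hn : 0 < n) :
    ∀ u : ℝ × ℝ → ℝ,
      u = (fun p => exp (-α * |p.1| / 2) * F α (p.2 * tan θ) ^ (cos θ ^ 2) *
            min 1 (max 0 (2 - |p.2 / n|))) →
      (∫ x in Omg θ, (u x) ^ 2)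
        ≤ 6 * (1 + 2 * cos θ ^ 2) * n / α ^ (2 * cos θ ^ 2 + 1) := by
  rintro u rfl
  set ρ := cos θ ^ 2
  have hρ0 : 0 ≤ ρ := sq_nonneg _
  have htan : 0 ≤ tan θ := (tan_pos_of_pos_of_lt_pi_div_two hθ.1 hθ.2).le
  have hsq : ∀ p : ℝ × ℝ, (exp (-α * |p.1| / 2) * F α (p.2 * tan θ) ^ ρ *
      min 1 (max 0 (2 - |p.2 / n|))) ^ 2 = exp (-α * |p.1|) * trialProfile α θ ρ n p.2 ^ 2 :=
    fun p => by
      rw [trialProfile, cutoff, mul_assoc, mul_pow, sq (exp _), ← exp_add, add_halves]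
  calc ∫ p in Omg θ, _ = ∫ y, F α (y * tan θ) * trialProfile α θ ρ n y ^ 2 := by
        simp_rw [hsq, Measure.volume_eq_prod]
        exact setIntegral_fst_lt_mul (integrable_exp_neg_mul_abs hα)
          (integrable_trialProfile_sq hα hρ0 hn) (measurable_id.mul_const _)
    _ ≤ ∫ y, stepBound n ((1 / α) ^ (2 * ρ + 1)) ((2 / α) ^ (2 * ρ + 1)) y :=
        integral_mono_of_nonneg
          (ae_of_all _ fun y => mul_nonneg (F_nonneg _ _) (sq_nonneg _))
          (integrable_stepBound _ _ _)
          (ae_of_all _ (F_mul_trialProfile_sq_le hα htan hρ0 hn))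
    _ = 2 * n * ((1 / α) ^ (2 * ρ + 1) + (2 / α) ^ (2 * ρ + 1)) := integral_stepBound hn.le _ _
    _ ≤ _ := two_mul_one_div_rpow_add_two_div_rpow_le hα hρ0 (cos_sq_le_one θ) hn.le
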